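/- arXiv:2412.13109 — 5 statements merged into one kernel-verified Lean document; each statement's English description precedes it below -/
import Mathlib

section
/- Let d ≥ 1 be an integer, 0 < η ≤ 1, and ε ≤ 1/d^{2η}. Then for any vector v ∈ [0,∞)^d and any probability vector b ∈ [0,1]^d, the biased operator B_{ε,b}(v) := Σ_{i=1}^d ((1-ε)/d + ε·b_i)·v_i satisfies B_{ε,b}(v) ≤ exp(4/d^η) · M_{(1+η)/η}(v), where M_r(v) = ((v_1^r + ⋯ + v_d^r)/d)^{1/r} is the r-power mean. -/
open Finset

theorem stmt_5 (d : ℕ) (hd : 1 ≤ d) (η : ℝ) (hη0 : 0 < η) (hη1 : η ≤ 1)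
    (ε : ℝ) (hε0 : 0 ≤ ε) (hε : ε ≤ 1 / (d : ℝ) ^ (2 * η))
    (v b : Fin d → ℝ) (hv : ∀ i, 0 ≤ v i)
    (hb0 : ∀ i, 0 ≤ b i) (hb1 : ∑ i, b i = 1) :
    ∑ i, ((1 - ε) / d + ε * b i) * v i ≤
      Real.exp (4 / (d : ℝ) ^ η) *
        ((∑ i, v i ^ ((1 + η) / η)) / d) ^ (η / (1 + η)) := by
  have hd0 : (0:ℝ) < d := by exact_mod_cast hd
  have hd1 : (1:ℝ) ≤ d := by exact_mod_cast hd
  set p : ℝ := (1 + η) / η with hp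
  have hp0 : 0 < p := by positivity
  have hp1 : 1 ≤ p := by
    rw [hp, le_div_iff₀ hη0]; linarith
  have hq : η / (1 + η) = 1 / p := by
    rw [hp]; field_simp
  set S : ℝ := ∑ i, v i ^ p with hSdef
  have hS0 : 0 ≤ S := Finset.sum_nonneg fun i _ => Real.rpow_nonneg (hv i) p
  set M : ℝ := (S / d) ^ (η / (1 + η)) with hM
  have hM0 : 0 ≤ M := Real.rpow_nonneg (by positivity) _
  -- Step A : arithmetic mean ≤ p-power mean
  have stepA : (∑ i, v i) / d ≤ M := by
    have h := Real.arith_mean_le_rpow_mean Finset.univ (fun _ => 1 / (d:ℝ)) v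
      (fun i _ => by positivity)
      (by simp [Finset.sum_const, Finset.card_univ]; field_simp)
      (fun i _ => hv i) hp1
    calc (∑ i, v i) / d = ∑ i, (1 / (d:ℝ)) * v i := by
          rw [Finset.sum_div]; congr 1; ext i; ring
      _ ≤ (∑ i, (1 / (d:ℝ)) * v i ^ p) ^ (1 / p) := h
      _ = M := by
          rw [hM, hq]; congr 1
          rw [hSdef, Finset.sum_div]; congr 1; ext i; ring
  -- Step B : each v i ≤ S^(1/p), so ∑ b i * v i ≤ S^(1/p)
  have stepB : ∑ i, b i * v i ≤ S ^ (1 / p) := by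
    calc ∑ i, b i * v i ≤ ∑ i, b i * S ^ (1 / p) := by
          apply Finset.sum_le_sum
          intro i _
          apply mul_le_mul_of_nonneg_left _ (hb0 i)
          calc v i = (v i ^ p) ^ (1 / p) := by
                rw [← Real.rpow_mul (hv i), mul_one_div, div_self hp0.ne', Real.rpow_one]
            _ ≤ S ^ (1 / p) := by
                apply Real.rpow_le_rpow (Real.rpow_nonneg (hv i) p) _ (by positivity)
                exact Finset.single_le_sum (fun j _ => Real.rpow_nonneg (hv j) p) (Finset.mem_univ i)
      _ = S ^ (1 / p) := by rw [← Finset.sum_mul, hb1, one_mul]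
  have hSM : S ^ (1 / p) = (d:ℝ) ^ (1/p) * M := by
    rw [hM, hq]
    rw [← Real.mul_rpow (le_of_lt hd0) (by positivity)]
    congr 1
    field_simp
  -- combine
  have key : ∑ i, ((1 - ε) / d + ε * b i) * v i ≤ (1 + ε * (d:ℝ) ^ (1/p)) * M := by
    calc ∑ i, ((1 - ε) / d + ε * b i) * v i
        ≤ ∑ i, (1 / (d:ℝ) + ε * b i) * v i := by
          apply Finset.sum_le_sum
          intro i _
          apply mul_le_mul_of_nonneg_right _ (hv i)
          have : (1 - ε) / (d:ℝ) ≤ 1 / d := by gcongr; linarith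
          linarith [this]
      _ = (∑ i, v i) / d + ε * ∑ i, b i * v i := by
          rw [Finset.sum_div, Finset.mul_sum]
          rw [← Finset.sum_add_distrib]
          congr 1; ext i; ring
      _ ≤ M + ε * (S ^ (1/p)) := by
          apply add_le_add stepA
          exact mul_le_mul_of_nonneg_left stepB hε0
      _ = (1 + ε * (d:ℝ) ^ (1/p)) * M := by rw [hSM]; ring
  -- final constant bound
  have hconst : 1 + ε * (d:ℝ) ^ (1/p) ≤ Real.exp (4 / (d:ℝ) ^ η) := by
    have h1 : ε * (d:ℝ) ^ (1/p) ≤ (d:ℝ) ^ (-η) := by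
      have h2 : ε * (d:ℝ) ^ (1/p) ≤ (1 / (d:ℝ) ^ (2*η)) * (d:ℝ) ^ (1/p) :=
        mul_le_mul_of_nonneg_right hε (Real.rpow_nonneg (le_of_lt hd0) _)
      have h3 : (1 / (d:ℝ) ^ (2*η)) * (d:ℝ) ^ (1/p) = (d:ℝ) ^ (1/p - 2*η) := by
        rw [Real.rpow_sub hd0]; ring
      have h4 : (d:ℝ) ^ (1/p - 2*η) ≤ (d:ℝ) ^ (-η) := by
        apply Real.rpow_le_rpow_of_exponent_le hd1
        rw [← hq]
        have : η / (1 + η) ≤ η := by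
          rw [div_le_iff₀ (by positivity : (0:ℝ) < 1 + η)]; nlinarith
        linarith
      linarith [h2, h3 ▸ h2, h4]
    have h5 : (d:ℝ) ^ (-η) ≤ 4 / (d:ℝ) ^ η := by
      rw [Real.rpow_neg (le_of_lt hd0), inv_eq_one_div, div_le_div_iff₀ (by positivity) (by positivity)]
      nlinarith [Real.rpow_pos_of_pos hd0 η]
    calc 1 + ε * (d:ℝ) ^ (1/p) ≤ 1 + (d:ℝ) ^ (-η) := by linarith
      _ ≤ Real.exp ((d:ℝ) ^ (-η)) := by linarith [Real.add_one_le_exp ((d:ℝ) ^ (-η))]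
      _ ≤ Real.exp (4 / (d:ℝ) ^ η) := Real.exp_le_exp.mpr h5
  calc ∑ i, ((1 - ε) / d + ε * b i) * v i ≤ (1 + ε * (d:ℝ) ^ (1/p)) * M := key
    _ ≤ Real.exp (4 / (d:ℝ) ^ η) * M := mul_le_mul_of_nonneg_right hconst hM0
end

section
/- For every η ∈ (0,1] and every integer d ≥ 3, with r = 1+η, the quantity (1 + (1 + d·d^{-2η})^r / d)^{1/r} is at most exp(4·d^{-η}). -/
theorem stmt_9 (η : ℝ) (hη0 : 0 < η) (hη1 : η ≤ 1) (d : ℕ) (hd : 3 ≤ d) :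
    (1 + (1 + (d : ℝ) * (d : ℝ) ^ (-(2 * η))) ^ (1 + η) / d) ^ (1 / (1 + η)) ≤
      Real.exp (4 * (d : ℝ) ^ (-η)) := by
  have hd3 : (3 : ℝ) ≤ (d : ℝ) := by exact_mod_cast hd
  have hd0 : (0 : ℝ) < (d : ℝ) := by linarith
  have hd1 : (1 : ℝ) < (d : ℝ) := by linarith
  set m : ℝ := max (1 - 2 * η) 0 with hm
  have hm0 : 0 ≤ m := le_max_right _ _
  have hdm1 : (1 : ℝ) ≤ (d : ℝ) ^ m := Real.one_le_rpow (by linarith) hm0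
  have heq : (d : ℝ) * (d : ℝ) ^ (-(2 * η)) = (d : ℝ) ^ (1 - 2 * η) := by
    rw [show (1 - 2 * η) = 1 + (-(2 * η)) by ring, Real.rpow_add hd0, Real.rpow_one]
  have hpow0 : (0 : ℝ) < (d : ℝ) ^ (1 - 2 * η) := Real.rpow_pos_of_pos hd0 _
  have hA : 1 + (d : ℝ) ^ (1 - 2 * η) ≤ 2 * (d : ℝ) ^ m := by
    have h1 : (d : ℝ) ^ (1 - 2 * η) ≤ (d : ℝ) ^ m :=
      Real.rpow_le_rpow_of_exponent_le (by linarith) (le_max_left _ _)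
    linarith
  have hr0 : (0 : ℝ) ≤ 1 + η := by linarith
  have hB : (1 + (d : ℝ) ^ (1 - 2 * η)) ^ (1 + η) ≤ (2 * (d : ℝ) ^ m) ^ (1 + η) :=
    Real.rpow_le_rpow (by linarith) hA hr0
  have hC : (2 * (d : ℝ) ^ m) ^ (1 + η) ≤ 4 * (d : ℝ) ^ (1 - η) := by
    rw [Real.mul_rpow (by norm_num) (by positivity), ← Real.rpow_mul hd0.le]
    have h2 : (2 : ℝ) ^ (1 + η) ≤ 4 := by
      have : (2 : ℝ) ^ (1 + η) ≤ (2 : ℝ) ^ (2 : ℝ) :=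
        Real.rpow_le_rpow_of_exponent_le (by norm_num) (by linarith)
      calc (2 : ℝ) ^ (1 + η) ≤ (2 : ℝ) ^ (2 : ℝ) := this
        _ = 4 := by
          rw [show (2 : ℝ) = ((2 : ℕ) : ℝ) by norm_num, Real.rpow_natCast]; norm_num
    have h3 : (d : ℝ) ^ (m * (1 + η)) ≤ (d : ℝ) ^ (1 - η) := by
      apply Real.rpow_le_rpow_of_exponent_le (by linarith)
      rcases max_cases (1 - 2 * η) 0 with ⟨h, _⟩ | ⟨h, _⟩ <;> rw [hm, h] <;> nlinarith
    have h4 : (0 : ℝ) ≤ (d : ℝ) ^ (m * (1 + η)) := by positivity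
    nlinarith [Real.rpow_pos_of_pos (show (0:ℝ) < 2 by norm_num) (1 + η)]
  have hdiv : 4 * (d : ℝ) ^ (1 - η) / d = 4 * (d : ℝ) ^ (-η) := by
    rw [show (1 - η) = 1 + (-η) by ring, Real.rpow_add hd0, Real.rpow_one]
    field_simp
  have hbase : 1 + (1 + (d : ℝ) * (d : ℝ) ^ (-(2 * η))) ^ (1 + η) / d
      ≤ 1 + 4 * (d : ℝ) ^ (-η) := by
    rw [heq, ← hdiv]
    have h := div_le_div_of_nonneg_right (le_trans hB hC) hd0.le
    linarith
  have hbase1 : (1 : ℝ) ≤ 1 + (1 + (d : ℝ) * (d : ℝ) ^ (-(2 * η))) ^ (1 + η) / d := by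
    have : (0 : ℝ) ≤ (1 + (d : ℝ) * (d : ℝ) ^ (-(2 * η))) ^ (1 + η) / d := by positivity
    linarith
  have hexp : 1 / (1 + η) ≤ 1 := by
    rw [div_le_one (by linarith)]; linarith
  calc (1 + (1 + (d : ℝ) * (d : ℝ) ^ (-(2 * η))) ^ (1 + η) / d) ^ (1 / (1 + η))
      ≤ (1 + 4 * (d : ℝ) ^ (-η)) ^ (1 / (1 + η)) :=
        Real.rpow_le_rpow (by linarith) hbase (one_div_nonneg.mpr (by linarith))
    _ ≤ (1 + 4 * (d : ℝ) ^ (-η)) ^ (1 : ℝ) :=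
        Real.rpow_le_rpow_of_exponent_le (by linarith [Real.rpow_pos_of_pos hd0 (-η)]) hexp
    _ = 1 + 4 * (d : ℝ) ^ (-η) := Real.rpow_one _
    _ ≤ Real.exp (4 * (d : ℝ) ^ (-η)) := by
        linarith [Real.add_one_le_exp (4 * (d : ℝ) ^ (-η))]
end

section
/- Let G be a d-regular graph with d ≥ 3, let U be a non-empty vertex subset, and let 0 ≤ θ ≤ 1/3. Define edge weights w(u,v) = (1-θ)^{max{dist(u,U), dist(v,U)}} and let π_Q be the stationary distribution of the induced walk. Then for every u ∈ U, π_Q(u) ≥ (1/(2d|U|)) · (|U|/n)^{1 + log(1-θ)/log d}. -/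
/-!
Write `δ = setDist G U`, `n = |V|` and `1 - θ = d ^ (-a)`, so that `0 ≤ a ≤ 1` because
`1 / d ≤ 2 / 3 ≤ 1 - θ`. A vertex of `U` has weight at least `d (1 - θ)`, and the total weight
is at most `d ∑ₓ (1 - θ) ^ δ x = d ∑ₓ (d ^ (-δ x)) ^ a ≤ d n ^ (1 - a) (∑ₓ d ^ (-δ x)) ^ a` by
Hölder's inequality. Every vertex at distance `k + 1` from `U` has a neighbour at distance `k`,
so in a `d`-regular graph there are at most `d (d - 1) ^ k |U|` vertices at distance `k + 1`, and
`∑ₓ d ^ (-δ x)` is bounded by a geometric series: it is at most `(d + 1) |U| ≤ 2 d |U|`. What is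
left of the claimed bound is `2 ^ a ≤ 2 d (1 - θ) ^ 2`.
-/

open Finset

/-- The graph distance from a vertex `v` to a set of vertices `U`. -/
noncomputable def setDist {V : Type*} (G : SimpleGraph V) (U : Finset V) (v : V) : ℕ :=
  sInf ((fun u => G.dist v u) '' (U : Set V))

section SetDist

variable {V : Type*} (G : SimpleGraph V) {U : Finset V}

lemma setDist_le_dist {u : V} (hu : u ∈ U) (v : V) : setDist G U v ≤ G.dist v u :=
  Nat.sInf_le ⟨u, hu, rfl⟩

lemma exists_mem_dist_eq_setDist (hU : U.Nonempty) (v : V) :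
    ∃ u ∈ U, G.dist v u = setDist G U v := by
  obtain ⟨u, hu⟩ := hU
  exact Nat.sInf_mem (s := (fun u => G.dist v u) '' (U : Set V)) ⟨_, u, hu, rfl⟩

lemma setDist_of_mem {u : V} (hu : u ∈ U) : setDist G U u = 0 :=
  Nat.eq_zero_of_le_zero (by simpa using setDist_le_dist G hu u)

lemma mem_of_setDist_eq_zero (hconn : G.Connected) (hU : U.Nonempty) {v : V}
    (h : setDist G U v = 0) : v ∈ U := by
  obtain ⟨u, hu, hvu⟩ := exists_mem_dist_eq_setDist G hU v
  rw [h, hconn.dist_eq_zero_iff] at hvu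
  exact hvu ▸ hu

lemma setDist_le_setDist_add_one (hconn : G.Connected) (hU : U.Nonempty) {x y : V}
    (h : G.Adj x y) : setDist G U x ≤ setDist G U y + 1 := by
  obtain ⟨u, hu, hyu⟩ := exists_mem_dist_eq_setDist G hU y
  calc setDist G U x ≤ G.dist x u := setDist_le_dist G hu x
    _ ≤ G.dist x y + G.dist y u := hconn.dist_triangle
    _ ≤ setDist G U y + 1 := by
      rw [hyu, add_comm, SimpleGraph.dist_eq_one_iff_adj.mpr h]

lemma exists_adj_setDist_eq (hconn : G.Connected) (hU : U.Nonempty) {x : V} {k : ℕ}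
    (h : setDist G U x = k + 1) : ∃ y, G.Adj x y ∧ setDist G U y = k := by
  obtain ⟨u, hu, hxu⟩ := exists_mem_dist_eq_setDist G hU x
  obtain ⟨p, hp⟩ := (hconn x u).exists_walk_length_eq_dist
  rw [hxu, h] at hp
  cases p with
  | nil => simp at hp
  | @cons _ y _ hxy q =>
    refine ⟨y, hxy, le_antisymm ?_ (by linarith [setDist_le_setDist_add_one G hconn hU hxy])⟩
    calc setDist G U y ≤ G.dist y u := setDist_le_dist G hu y
      _ ≤ q.length := SimpleGraph.dist_le q
      _ = k := by simpa using hp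

end SetDist

lemma SimpleGraph.card_le_mul_card_of_forall_exists_adj {V : Type*} (G : SimpleGraph V)
    [DecidableRel G.Adj] {s t : Finset V} {c : ℕ} (hs : ∀ x ∈ s, ∃ y ∈ t, G.Adj x y)
    (ht : ∀ y ∈ t, #{x ∈ s | G.Adj x y} ≤ c) : #s ≤ c * #t := by
  have := card_mul_le_card_mul G.Adj (m := 1) (fun x hx => ?_) ht
  · simpa [mul_comm] using this
  obtain ⟨y, hy, hxy⟩ := hs x hx
  exact card_pos.mpr ⟨y, mem_filter.mpr ⟨hy, hxy⟩⟩

lemma Finset.sum_rpow_le_card_rpow_mul_rpow_sum {ι : Type*} (s : Finset ι) {f : ι → ℝ}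
    (hf : ∀ i, 0 ≤ f i) {a : ℝ} (ha0 : 0 ≤ a) (ha1 : a ≤ 1) :
    ∑ i ∈ s, f i ^ a ≤ (#s : ℝ) ^ (1 - a) * (∑ i ∈ s, f i) ^ a := by
  rcases ha0.eq_or_lt with rfl | ha0
  · simp
  · have := Real.inner_le_weight_mul_Lp_of_nonneg s ((one_le_inv₀ ha0).2 ha1) (fun _ => 1)
      (fun i => f i ^ a) (fun _ => zero_le_one) (fun i => Real.rpow_nonneg (hf i) a)
    simpa [← Real.rpow_mul (hf _), ha0.ne'] using this

section Layers

variable {V : Type*} [Fintype V] (G : SimpleGraph V) (U : Finset V)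

noncomputable def setDistLayer (k : ℕ) : Finset V := {x | setDist G U x = k}

variable {G U}

lemma mem_setDistLayer {k : ℕ} {x : V} : x ∈ setDistLayer G U k ↔ setDist G U x = k := by
  simp [setDistLayer]

lemma card_setDistLayer_zero_le (hconn : G.Connected) (hU : U.Nonempty) :
    #(setDistLayer G U 0) ≤ #U :=
  card_le_card fun _ hx => mem_of_setDist_eq_zero G hconn hU (mem_setDistLayer.mp hx)

variable [DecidableRel G.Adj] {d : ℕ}

lemma card_setDistLayer_one_le (hconn : G.Connected) (hU : U.Nonempty)
    (hreg : G.IsRegularOfDegree d) : #(setDistLayer G U 1) ≤ d * #(setDistLayer G U 0) := by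
  classical
  refine G.card_le_mul_card_of_forall_exists_adj (fun x hx => ?_) (fun y _ => ?_)
  · obtain ⟨y, hxy, hy⟩ := exists_adj_setDist_eq G hconn hU (mem_setDistLayer.mp hx)
    exact ⟨y, mem_setDistLayer.mpr hy, hxy⟩
  · rw [← hreg y, ← G.card_neighborFinset_eq_degree]
    exact card_le_card fun x hx => by simpa [G.adj_comm] using (mem_filter.mp hx).2

/-- A vertex of layer `k + 1` has a neighbour in layer `k`, hence at most `d - 1` neighbours in
layer `k + 2`. -/
lemma card_setDistLayer_add_two_le (hconn : G.Connected) (hU : U.Nonempty)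
    (hreg : G.IsRegularOfDegree d) (k : ℕ) :
    #(setDistLayer G U (k + 2)) ≤ (d - 1) * #(setDistLayer G U (k + 1)) := by
  classical
  refine G.card_le_mul_card_of_forall_exists_adj (fun x hx => ?_) (fun y hy => ?_)
  · obtain ⟨y, hxy, hy⟩ := exists_adj_setDist_eq G hconn hU (mem_setDistLayer.mp hx)
    exact ⟨y, mem_setDistLayer.mpr hy, hxy⟩
  · obtain ⟨z, hyz, hz⟩ := exists_adj_setDist_eq G hconn hU (mem_setDistLayer.mp hy)
    rw [← hreg y, ← G.card_neighborFinset_eq_degree,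
      ← card_erase_of_mem ((G.mem_neighborFinset y z).mpr hyz)]
    refine card_le_card fun x hx => ?_
    obtain ⟨hx, hxy⟩ := mem_filter.mp hx
    have hkx := mem_setDistLayer.mp hx
    refine mem_erase.mpr ⟨?_, (G.mem_neighborFinset y x).mpr hxy.symm⟩
    rintro rfl
    omega

lemma card_setDistLayer_succ_le (hconn : G.Connected) (hU : U.Nonempty)
    (hreg : G.IsRegularOfDegree d) (k : ℕ) :
    #(setDistLayer G U (k + 1)) ≤ d * (d - 1) ^ k * #U := by
  induction k with
  | zero =>
    simpa using (card_setDistLayer_one_le hconn hU hreg).trans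
      (Nat.mul_le_mul_left d (card_setDistLayer_zero_le hconn hU))
  | succ k ih =>
    calc #(setDistLayer G U (k + 2))
        ≤ (d - 1) * #(setDistLayer G U (k + 1)) := card_setDistLayer_add_two_le hconn hU hreg k
      _ ≤ (d - 1) * (d * (d - 1) ^ k * #U) := Nat.mul_le_mul_left _ ih
      _ = d * (d - 1) ^ (k + 1) * #U := by ring

lemma sum_inv_pow_setDist_le (hconn : G.Connected) (hU : U.Nonempty)
    (hreg : G.IsRegularOfDegree d) (hd : 0 < d) :
    ∑ x, ((d : ℝ)⁻¹) ^ setDist G U x ≤ (d + 1) * #U := by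
  obtain ⟨N, hN⟩ : ∃ N, ∀ x, setDist G U x < N + 1 :=
    ⟨univ.sup (setDist G U), fun x => Nat.lt_succ_of_le (le_sup (mem_univ x))⟩
  have hD : (1 : ℝ) ≤ d := by exact_mod_cast hd
  set r : ℝ := (d - 1) / d
  have hlayer (k : ℕ) : #(setDistLayer G U (k + 1)) * ((d : ℝ)⁻¹) ^ (k + 1) ≤ #U * r ^ k := by
    have hcard := (Nat.cast_le (α := ℝ)).mpr (card_setDistLayer_succ_le hconn hU hreg k)
    push_cast [Nat.cast_sub hd] at hcard
    calc #(setDistLayer G U (k + 1)) * ((d : ℝ)⁻¹) ^ (k + 1)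
        ≤ d * (d - 1) ^ k * #U * ((d : ℝ)⁻¹) ^ (k + 1) := by gcongr
      _ = #U * r ^ k := by
        have : (d : ℝ) ≠ 0 := by positivity
        simp only [r, div_pow, inv_pow, pow_succ]; field_simp
  have hgeom : ∑ k ∈ range N, r ^ k ≤ d := by
    have hr : 1 - r = (d : ℝ)⁻¹ := by simp only [r]; field_simp; ring
    rw [range_eq_Ico]
    refine (geom_sum_Ico_le_of_lt_one (div_nonneg (by linarith) (by linarith)) ?_).trans_eq ?_
    · rw [div_lt_one (by linarith)]; linarith
    · rw [hr, pow_zero, one_div, inv_inv]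
  calc ∑ x, ((d : ℝ)⁻¹) ^ setDist G U x
      = ∑ k ∈ range (N + 1), #(setDistLayer G U k) * ((d : ℝ)⁻¹) ^ k := by
        rw [← sum_fiberwise_of_maps_to (g := setDist G U) (fun x _ => mem_range.mpr (hN x))]
        refine sum_congr rfl fun k _ => ?_
        rw [setDistLayer, ← nsmul_eq_mul, ← sum_const]
        exact sum_congr rfl fun x hx => by rw [(mem_filter.mp hx).2]
    _ = ∑ k ∈ range N, #(setDistLayer G U (k + 1)) * ((d : ℝ)⁻¹) ^ (k + 1)
          + #(setDistLayer G U 0) := by simp [sum_range_succ']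
    _ ≤ ∑ k ∈ range N, #U * r ^ k + #U :=
        add_le_add (sum_le_sum fun k _ => hlayer k)
          (by exact_mod_cast card_setDistLayer_zero_le hconn hU)
    _ ≤ #U * d + #U := by rw [← mul_sum]; gcongr
    _ = (d + 1) * #U := by ring

lemma sum_rpow_neg_pow_setDist_le (hconn : G.Connected) (hU : U.Nonempty)
    (hreg : G.IsRegularOfDegree d) (hd : 0 < d) {a : ℝ} (ha0 : 0 ≤ a) (ha1 : a ≤ 1) :
    ∑ x, ((d : ℝ) ^ (-a)) ^ setDist G U x ≤
      (Fintype.card V : ℝ) ^ (1 - a) * (2 * d * #U) ^ a := by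
  have hpow (k : ℕ) : ((d : ℝ) ^ (-a)) ^ k = (((d : ℝ)⁻¹) ^ k) ^ a := by
    rw [← Real.rpow_pow_comm (by positivity), Real.inv_rpow (by positivity),
      Real.rpow_neg (by positivity)]
  have hD : (1 : ℝ) ≤ d := by exact_mod_cast hd
  simp only [hpow]
  calc _ ≤ (Fintype.card V : ℝ) ^ (1 - a) * (∑ x, ((d : ℝ)⁻¹) ^ setDist G U x) ^ a := by
        simpa using univ.sum_rpow_le_card_rpow_mul_rpow_sum (fun x => by positivity) ha0 ha1
    _ ≤ (Fintype.card V : ℝ) ^ (1 - a) * (2 * d * #U) ^ a := by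
        gcongr
        exact (sum_inv_pow_setDist_le hconn hU hreg hd).trans (by gcongr; linarith)

end Layers

section Weights

variable {V : Type*} [Fintype V] {G : SimpleGraph V} [DecidableRel G.Adj] {U : Finset V}
  {d : ℕ} {β : ℝ}

lemma mul_le_sum_pow_max_setDist_of_mem (hreg : G.IsRegularOfDegree d) (hβ0 : 0 ≤ β)
    (hβ1 : β ≤ 1) {u : V} (hu : u ∈ U) :
    d * β ≤ ∑ z ∈ G.neighborFinset u, β ^ max (setDist G U u) (setDist G U z) := by
  have hterm (z : V) (hz : z ∈ G.neighborFinset u) :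
      β ≤ β ^ max (setDist G U u) (setDist G U z) := by
    have hzu : setDist G U z ≤ 1 := (setDist_le_dist G hu z).trans
      (SimpleGraph.dist_le ((G.mem_neighborFinset u z).mp hz).symm.toWalk)
    rw [setDist_of_mem G hu]
    simpa using pow_le_pow_of_le_one hβ0 hβ1 (show max 0 (setDist G U z) ≤ 1 by omega)
  calc d * β = #(G.neighborFinset u) • β := by
        rw [G.card_neighborFinset_eq_degree, hreg u, nsmul_eq_mul]
    _ ≤ _ := card_nsmul_le_sum _ _ _ hterm

lemma sum_sum_pow_max_setDist_le (hreg : G.IsRegularOfDegree d) (hβ0 : 0 ≤ β) (hβ1 : β ≤ 1) :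
    ∑ x, ∑ z ∈ G.neighborFinset x, β ^ max (setDist G U x) (setDist G U z) ≤
      d * ∑ x, β ^ setDist G U x := by
  rw [mul_sum]
  refine sum_le_sum fun x _ => ?_
  calc _ ≤ ∑ _z ∈ G.neighborFinset x, β ^ setDist G U x :=
        sum_le_sum fun z _ => pow_le_pow_of_le_one hβ0 hβ1 (le_max_left _ _)
    _ = d * β ^ setDist G U x := by
        rw [sum_const, G.card_neighborFinset_eq_degree, hreg x, nsmul_eq_mul]

lemma div_le_sum_pow_max_setDist_div_of_mem (hreg : G.IsRegularOfDegree d) (hd : 0 < d)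
    (hβ0 : 0 < β) (hβ1 : β ≤ 1) {u : V} (hu : u ∈ U) {B : ℝ}
    (hB : ∑ x, β ^ setDist G U x ≤ B) :
    β / B ≤ (∑ z ∈ G.neighborFinset u, β ^ max (setDist G U u) (setDist G U z)) /
      ∑ x, ∑ z ∈ G.neighborFinset x, β ^ max (setDist G U x) (setDist G U z) := by
  have hnum := mul_le_sum_pow_max_setDist_of_mem hreg hβ0.le hβ1 hu
  have hden_pos : 0 < ∑ x, ∑ z ∈ G.neighborFinset x, β ^ max (setDist G U x) (setDist G U z) :=
    (by positivity : (0 : ℝ) < d * β).trans_le <| hnum.trans <|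
      single_le_sum
        (f := fun x => ∑ z ∈ G.neighborFinset x, β ^ max (setDist G U x) (setDist G U z))
        (fun x _ => sum_nonneg fun z _ => by positivity) (mem_univ u)
  calc β / B = d * β / (d * B) := (mul_div_mul_left _ _ (by positivity)).symm
    _ ≤ _ := div_le_div₀ (by positivity) hnum hden_pos
        ((sum_sum_pow_max_setDist_le hreg hβ0.le hβ1).trans (by gcongr))

end Weights

lemma neg_logb_mem_Icc {b x : ℝ} (hb : 1 < b) (hbx : b⁻¹ ≤ x) (hx : x ≤ 1) :
    -Real.logb b x ∈ Set.Icc 0 1 := by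
  have hx0 : 0 < x := (inv_pos.mpr (by linarith)).trans_le hbx
  refine ⟨neg_nonneg.mpr (Real.logb_nonpos hb hx0.le hx), ?_⟩
  rwa [neg_le, Real.le_logb_iff_rpow_le hb hx0, Real.rpow_neg_one]

lemma one_div_mul_rpow_le_rpow_neg_div {m n D a : ℝ} (hm : 0 < m) (hn : 0 < n) (hD : 0 < D)
    (ha : a ≤ 1) (hDa : 1 ≤ D * (D ^ (-a)) ^ 2) :
    1 / (2 * D * m) * (m / n) ^ (1 - a) ≤ D ^ (-a) / (n ^ (1 - a) * (2 * D * m) ^ a) := by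
  have hkey : (2 * D) ^ a ≤ 2 * D * D ^ (-a) := by
    have h2 : (2 : ℝ) ^ a ≤ 2 := Real.rpow_le_self_of_one_le one_le_two ha
    have hinv : D ^ a = (D ^ (-a))⁻¹ := by rw [Real.rpow_neg hD.le, inv_inv]
    have hpos : 0 < D ^ (-a) := by positivity
    rw [Real.mul_rpow zero_le_two hD.le, hinv]
    calc 2 ^ a * (D ^ (-a))⁻¹ ≤ 2 * (D ^ (-a))⁻¹ := by gcongr
      _ ≤ 2 * D * D ^ (-a) := by
        rw [mul_assoc, mul_le_mul_iff_right₀ zero_lt_two, inv_le_iff_one_le_mul₀ hpos]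
        nlinarith
  calc 1 / (2 * D * m) * (m / n) ^ (1 - a) = 1 / (2 * D) * (1 / (m ^ a * n ^ (1 - a))) := by
        rw [Real.div_rpow hm.le hn.le, Real.rpow_sub hm, Real.rpow_one]
        field_simp
    _ ≤ D ^ (-a) / (2 * D) ^ a * (1 / (m ^ a * n ^ (1 - a))) := by
        refine mul_le_mul_of_nonneg_right ?_ (by positivity)
        rw [div_le_div_iff₀ (by positivity) (by positivity)]
        linarith
    _ = D ^ (-a) / (n ^ (1 - a) * (2 * D * m) ^ a) := by
        rw [Real.mul_rpow (by positivity) hm.le]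
        field_simp

theorem stmt_10_general {V : Type*} [Fintype V] (G : SimpleGraph V)
    [DecidableRel G.Adj] (hconn : G.Connected) (d : ℕ) (hd : 3 ≤ d)
    (hreg : G.IsRegularOfDegree d)
    (U : Finset V) (hU : U.Nonempty) (θ : ℝ) (hθ0 : 0 ≤ θ) (hθ1 : θ ≤ 1 / 3)
    (w : V → V → ℝ)
    (hw : ∀ x y, w x y = (1 - θ) ^ max (setDist G U x) (setDist G U y))
    (u : V) (hu : u ∈ U) :
    1 / (2 * d * U.card) *
        ((U.card : ℝ) / (Fintype.card V : ℝ)) ^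
          (1 + Real.log (1 - θ) / Real.log d) ≤
      (∑ z ∈ G.neighborFinset u, w u z) /
        (∑ x : V, ∑ z ∈ G.neighborFinset x, w x z) := by
  have hD : (3 : ℝ) ≤ d := by exact_mod_cast hd
  set a := -Real.logb d (1 - θ) with ha
  have hβ : (d : ℝ) ^ (-a) = 1 - θ := by
    rw [ha, neg_neg, Real.rpow_logb (by positivity) (by linarith) (by linarith)]
  obtain ⟨ha0, ha1⟩ : a ∈ Set.Icc 0 1 := neg_logb_mem_Icc (by linarith)
    (by rw [inv_le_iff_one_le_mul₀ (by positivity)]; nlinarith) (by linarith)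
  have : Nonempty V := ⟨u⟩
  simp only [hw]
  rw [Real.log_div_log, show 1 + Real.logb d (1 - θ) = 1 - a by ring]
  calc _ ≤ (1 - θ) / ((Fintype.card V : ℝ) ^ (1 - a) * (2 * d * U.card) ^ a) := by
        rw [← hβ]
        exact one_div_mul_rpow_le_rpow_neg_div (by exact_mod_cast hU.card_pos)
          (by exact_mod_cast Fintype.card_pos) (by positivity) ha1 (by rw [hβ]; nlinarith)
    _ ≤ _ := div_le_sum_pow_max_setDist_div_of_mem hreg (by omega) (by linarith) (by linarith) hu
        (hβ ▸ sum_rpow_neg_pow_setDist_le hconn hU hreg (by omega) ha0 ha1)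

theorem stmt_10 {V : Type*} [Fintype V] [DecidableEq V] (G : SimpleGraph V)
    [DecidableRel G.Adj] (hconn : G.Connected) (d : ℕ) (hd : 3 ≤ d)
    (hreg : G.IsRegularOfDegree d)
    (U : Finset V) (hU : U.Nonempty) (θ : ℝ) (hθ0 : 0 ≤ θ) (hθ1 : θ ≤ 1 / 3)
    (w : V → V → ℝ)
    (hw : ∀ x y, w x y = (1 - θ) ^ max (setDist G U x) (setDist G U y))
    (u : V) (hu : u ∈ U) :
    1 / (2 * d * U.card) *
        ((U.card : ℝ) / (Fintype.card V : ℝ)) ^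
          (1 + Real.log (1 - θ) / Real.log d) ≤
      (∑ z ∈ G.neighborFinset u, w u z) /
        (∑ x : V, ∑ z ∈ G.neighborFinset x, w x z) :=
  stmt_10_general G hconn d hd hreg U hU θ hθ0 hθ1 w hw u hu
end

section
/- Let G be a finite graph with maximum degree d_max, let u be a vertex, S a set of length-t trajectories starting at u, and ε ∈ [0,1]. Then for any (time-dependent, adaptive) strategy for the ε-biased random walk, the probability q that its length-t trajectory lies in S satisfies q ≤ (1 + ε(d_max - 1))^t · p, where p is the probability that the length-t trajectory of the simple random walk from u lies in S. -/
open Finset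

/-- Probability that the simple random walk follows a given trajectory. -/
noncomputable def srwP {V : Type*} [Fintype V] [DecidableEq V]
    (G : SimpleGraph V) [DecidableRel G.Adj] : List V → ℝ
  | [] => 1
  | [_] => 1
  | x :: y :: rest =>
      (if G.Adj x y then 1 / (G.degree x : ℝ) else 0) * srwP G (y :: rest)

/-- Probability that the `ε`-time-biased random walk with (history-dependent)
strategy `σ` follows a given trajectory, where `hist` is the history so far. -/
noncomputable def tbrwP {V : Type*} [Fintype V] [DecidableEq V]
    (G : SimpleGraph V) [DecidableRel G.Adj] (ε : ℝ) (σ : List V → V → ℝ) :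
    List V → List V → ℝ
  | _, [] => 1
  | _, [_] => 1
  | hist, x :: y :: rest =>
      (if G.Adj x y then (1 - ε) / (G.degree x : ℝ) + ε * σ (hist ++ [x]) y else 0) *
        tbrwP G ε σ (hist ++ [x]) (y :: rest)

lemma srwP_nonneg {V : Type*} [Fintype V] [DecidableEq V]
    (G : SimpleGraph V) [DecidableRel G.Adj] : ∀ l : List V, 0 ≤ srwP G l
  | [] => by simp [srwP]
  | [_] => by simp [srwP]
  | x :: y :: rest => by
      rw [srwP]
      apply mul_nonneg _ (srwP_nonneg G (y :: rest))
      split <;> positivity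

lemma aux_nonneg {V : Type*} [Fintype V] [DecidableEq V] (G : SimpleGraph V)
    [DecidableRel G.Adj] (u : V) (ε : ℝ) (hε0 : 0 ≤ ε) (hε1 : ε ≤ 1)
    (σ : List V → V → ℝ)
    (hσ0 : ∀ h, h.head? = some u → h.Chain' G.Adj → ∀ y, 0 ≤ σ h y) :
    ∀ (l hist : List V), (hist ++ l).head? = some u → (hist ++ l).Chain' G.Adj →
      0 ≤ tbrwP G ε σ hist l
  | [], hist, _, _ => by simp [tbrwP]
  | [_], hist, _, _ => by simp [tbrwP]
  | x :: y :: rest, hist, hh, hc => by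
      rw [tbrwP]
      have hpre : (hist ++ [x]).head? = some u := by cases hist <;> simp_all
      have hcpre : (hist ++ [x]).Chain' G.Adj := hc.prefix ⟨y :: rest, by simp⟩
      have hh2 : ((hist ++ [x]) ++ (y :: rest)).head? = some u := by simpa using hh
      have hc2 : ((hist ++ [x]) ++ (y :: rest)).Chain' G.Adj := by simpa using hc
      apply mul_nonneg _ (aux_nonneg G u ε hε0 hε1 σ hσ0 (y :: rest) (hist ++ [x]) hh2 hc2)
      split
      · have hd1 : 0 < G.degree x := by
          rename_i hadj
          exact G.degree_pos_iff_exists_adj x |>.2 ⟨y, hadj⟩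
        have hdpos : (0:ℝ) < (G.degree x : ℝ) := by exact_mod_cast hd1
        have := hσ0 _ hpre hcpre y
        have : 0 ≤ (1 - ε) / (G.degree x : ℝ) := div_nonneg (by linarith) hdpos.le
        nlinarith [hσ0 _ hpre hcpre y]
      · exact le_refl _

lemma aux_le {V : Type*} [Fintype V] [DecidableEq V] (G : SimpleGraph V)
    [DecidableRel G.Adj] (dmax : ℕ) (hdmax : ∀ x, G.degree x ≤ dmax)
    (u : V) (ε : ℝ) (hε0 : 0 ≤ ε) (hε1 : ε ≤ 1) (σ : List V → V → ℝ)
    (hσ0 : ∀ h, h.head? = some u → h.Chain' G.Adj → ∀ y, 0 ≤ σ h y)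
    (hσsum : ∀ h : List V, h ≠ [] → h.head? = some u → h.Chain' G.Adj →
      ∑ y, σ h y = 1) :
    ∀ (l hist : List V), (hist ++ l).head? = some u → (hist ++ l).Chain' G.Adj →
      tbrwP G ε σ hist l ≤ (1 + ε * ((dmax : ℝ) - 1)) ^ (l.length - 1) * srwP G l
  | [], hist, _, _ => by simp [tbrwP, srwP]
  | [_], hist, _, _ => by simp [tbrwP, srwP]
  | x :: y :: rest, hist, hh, hc => by
      have hC : (0:ℝ) ≤ 1 + ε * ((dmax : ℝ) - 1) := by
        nlinarith [mul_nonneg hε0 (Nat.cast_nonneg (α := ℝ) dmax)]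
      rw [tbrwP, srwP]
      by_cases hadj : G.Adj x y
      · -- the history hist ++ [x] is valid
        have hpre : (hist ++ [x]).head? = some u := by
          cases hist <;> simp_all
        have hcpre : (hist ++ [x]).Chain' G.Adj := by
          apply hc.prefix
          exact ⟨y :: rest, by simp⟩
        have hh2 : ((hist ++ [x]) ++ (y :: rest)).head? = some u := by
          simpa using hh
        have hc2 : ((hist ++ [x]) ++ (y :: rest)).Chain' G.Adj := by
          simpa using hc
        have ih := aux_le G dmax hdmax u ε hε0 hε1 σ hσ0 hσsum (y :: rest) (hist ++ [x]) hh2 hc2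
        have hσle : σ (hist ++ [x]) y ≤ 1 := by
          rw [← hσsum (hist ++ [x]) (by simp) hpre hcpre]
          exact Finset.single_le_sum (fun z _ => hσ0 _ hpre hcpre z) (mem_univ y)
        have hσge : 0 ≤ σ (hist ++ [x]) y := hσ0 _ hpre hcpre y
        have hd1 : 1 ≤ G.degree x := by
          have : 0 < G.degree x := G.degree_pos_iff_exists_adj x |>.2 ⟨y, hadj⟩
          omega
        have hdpos : (0:ℝ) < (G.degree x : ℝ) := by exact_mod_cast hd1
        have hdle : (G.degree x : ℝ) ≤ (dmax : ℝ) := by exact_mod_cast hdmax x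
        have hfac : (1 - ε) / (G.degree x : ℝ) + ε * σ (hist ++ [x]) y ≤
            (1 + ε * ((dmax : ℝ) - 1)) * (1 / (G.degree x : ℝ)) := by
          rw [mul_one_div, div_add' _ _ _ hdpos.ne', div_le_div_iff₀ hdpos hdpos]
          nlinarith [mul_nonneg (mul_nonneg hε0 (sub_nonneg.2 hσle)) hdpos.le,
            mul_nonneg hε0 (sub_nonneg.2 hdle)]
        have hfac0 : 0 ≤ (1 - ε) / (G.degree x : ℝ) + ε * σ (hist ++ [x]) y := by
          have : 0 ≤ (1 - ε) / (G.degree x : ℝ) := div_nonneg (by linarith) hdpos.le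
          nlinarith
        simp only [hadj, if_true]
        calc ((1 - ε) / (G.degree x : ℝ) + ε * σ (hist ++ [x]) y) *
              tbrwP G ε σ (hist ++ [x]) (y :: rest)
            ≤ ((1 + ε * ((dmax : ℝ) - 1)) * (1 / (G.degree x : ℝ))) *
              ((1 + ε * ((dmax : ℝ) - 1)) ^ ((y :: rest).length - 1) * srwP G (y :: rest)) := by
              exact mul_le_mul hfac ih
                (aux_nonneg G u ε hε0 hε1 σ hσ0 (y :: rest) (hist ++ [x]) hh2 hc2)
                (by positivity)
          _ = (1 + ε * ((dmax : ℝ) - 1)) ^ ((x :: y :: rest).length - 1) *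
              ((1 / (G.degree x : ℝ)) * srwP G (y :: rest)) := by
              have e1 : (y :: rest).length - 1 = rest.length := by simp
              have e2 : (x :: y :: rest).length - 1 = rest.length + 1 := by simp
              rw [e1, e2, pow_succ]
              ring
          _ = _ := by simp [hadj]
      · simp only [hadj, if_false, zero_mul]
        positivity

theorem stmt_14 {V : Type*} [Fintype V] [DecidableEq V] (G : SimpleGraph V)
    [DecidableRel G.Adj] (dmax : ℕ) (hdmax : ∀ x, G.degree x ≤ dmax)
    (u : V) (t : ℕ) (S : Finset (List V))
    (hS : ∀ l ∈ S, l.length = t + 1 ∧ l.head? = some u ∧ l.Chain' G.Adj)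
    (ε : ℝ) (hε0 : 0 ≤ ε) (hε1 : ε ≤ 1) (σ : List V → V → ℝ)
    (hσ0 : ∀ h, h.head? = some u → h.Chain' G.Adj → ∀ y, 0 ≤ σ h y)
    (hσsupp : ∀ (h : List V) (x y : V), h.head? = some u → h.Chain' G.Adj →
      h.getLast? = some x → ¬ G.Adj x y → σ h y = 0)
    (hσsum : ∀ h : List V, h ≠ [] → h.head? = some u → h.Chain' G.Adj →
      ∑ y, σ h y = 1) :
    ∑ l ∈ S, tbrwP G ε σ [] l ≤
      (1 + ε * ((dmax : ℝ) - 1)) ^ t * ∑ l ∈ S, srwP G l := by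

  rw [Finset.mul_sum]
  apply Finset.sum_le_sum
  intro l hl
  obtain ⟨hlen, hhead, hchain⟩ := hS l hl
  have := aux_le G dmax hdmax u ε hε0 hε1 σ hσ0 hσsum l [] (by simpa using hhead)
    (by simpa using hchain)
  rwa [hlen, Nat.add_sub_cancel] at this
end

section
/- Let G be a finite graph with minimum degree d_min and maximum degree d_max, u a vertex, S a set of length-t trajectories starting at u, 0 < η ≤ 1, and ε ≤ 1/d_max^{2η}. Then for any strategy of the ε-time-biased random walk, q_{u,S}(ε) ≤ exp(4t/d_min^η) · (p_{u,S})^{η/(1+η)}, where p_{u,S} is the probability of S under the simple random walk and q_{u,S}(ε) under the biased walk. -/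
open Finset

/-! Write `q` and `p` for the probabilities of a trajectory under the biased and the simple walk.
By the weighted Hölder inequality,
`∑_S q ≤ (∑_S p) ^ (η / (1 + η)) * (∑_S q ^ (1 + η) / p ^ η) ^ (1 / (1 + η))`,
so it suffices to bound `∑_S q ^ (1 + η) / p ^ η` by
`(1 + 4 / dmin ^ η) ^ t ≤ exp (4 t / dmin ^ η)`.
Grouping trajectories by their first step, this sum factors along the tree of trajectories, and
at a vertex `x` of degree `d` the one-step factor `∑_{y ~ x} q(x, y) ^ (1 + η) * d ^ η` is at most
`1 + 2 ε (1 + d ^ η) ≤ 1 + 4 / dmin ^ η`, by `(a + b) ^ (1 + η) ≤ a ^ (1 + η) + 2 (a + b) ^ η b`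
and the assumption `ε ≤ dmax ^ (-2 η)`.
-/

open Real

lemma add_rpow_one_add_le {a b η : ℝ} (ha : 0 ≤ a) (hb : 0 ≤ b) (hη0 : 0 ≤ η) (hη1 : η ≤ 1) :
    (a + b) ^ (1 + η) ≤ a ^ (1 + η) + 2 * (a + b) ^ η * b := by
  have hab : 0 ≤ a + b := by linarith
  -- `a ^ (1 - η) ≤ (a + b) ^ (1 - η)`, multiplied by `a ^ η * (a + b) ^ η`
  have h : (a + b) ^ η * a ≤ a ^ η * (a + b) := by
    calc (a + b) ^ η * a = (a + b) ^ η * (a ^ η * a ^ (1 - η)) := by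
          rw [← rpow_add' ha (by norm_num), add_sub_cancel, rpow_one]
      _ ≤ (a + b) ^ η * (a ^ η * (a + b) ^ (1 - η)) := by
          gcongr; linarith
      _ = a ^ η * (a + b) := by
          rw [mul_left_comm, ← rpow_add' hab (by norm_num), add_sub_cancel, rpow_one]
  have h' : a ^ η * b ≤ (a + b) ^ η * b := by gcongr; linarith
  rw [rpow_add' hab (by linarith), rpow_add' ha (by linarith), rpow_one, rpow_one]
  linarith

lemma sum_mix_rpow_mul_card_rpow_le {ι : Type*} (N : Finset ι) (hN : N.Nonempty) (s : ι → ℝ)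
    (hs0 : ∀ y ∈ N, 0 ≤ s y) (hs1 : ∑ y ∈ N, s y ≤ 1) {η ε : ℝ} (hη0 : 0 ≤ η) (hη1 : η ≤ 1)
    (hε0 : 0 ≤ ε) (hε1 : ε ≤ 1) :
    ∑ y ∈ N, ((1 - ε) / #N + ε * s y) ^ (1 + η) * (#N : ℝ) ^ η ≤
      1 + 2 * ε * (1 + (#N : ℝ) ^ η) := by
  set d : ℝ := (#N : ℝ)
  have hd : 0 < d := by simpa [d] using hN.card_pos
  have hterm : ∀ y ∈ N, ((1 - ε) / d + ε * s y) ^ (1 + η) * d ^ η ≤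
      1 / d + 2 * (1 + d ^ η) * ε * s y := by
    intro y hy
    have hsy : s y ≤ 1 := (single_le_sum hs0 hy).trans hs1
    have hb : 0 ≤ d * ε * s y := by have := hs0 y hy; positivity
    have hc : 1 - ε + d * ε * s y ≤ 1 + d := by nlinarith [mul_le_mul_of_nonneg_left hsy hε0]
    calc ((1 - ε) / d + ε * s y) ^ (1 + η) * d ^ η
        = (1 - ε + d * ε * s y) ^ (1 + η) / d := by
          rw [show (1 - ε) / d + ε * s y = (1 - ε + d * ε * s y) / d by field_simp,
            div_rpow (by linarith) hd.le, rpow_add' hd.le (by linarith), rpow_one]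
          field_simp
      _ ≤ ((1 - ε) ^ (1 + η) + 2 * (1 - ε + d * ε * s y) ^ η * (d * ε * s y)) / d := by
          gcongr; exact add_rpow_one_add_le (by linarith) hb hη0 hη1
      _ ≤ (1 + 2 * (1 + d ^ η) * (d * ε * s y)) / d := by
          gcongr
          · exact rpow_le_one (by linarith) (by linarith) (by linarith)
          · calc (1 - ε + d * ε * s y) ^ η ≤ (1 + d) ^ η := by gcongr
              _ ≤ 1 ^ η + d ^ η := rpow_add_le_add_rpow zero_le_one hd.le hη0 hη1
              _ = 1 + d ^ η := by rw [one_rpow]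
      _ = 1 / d + 2 * (1 + d ^ η) * ε * s y := by field_simp
  calc _ ≤ ∑ y ∈ N, (1 / d + 2 * (1 + d ^ η) * ε * s y) := sum_le_sum hterm
    _ = 1 + 2 * (1 + d ^ η) * ε * ∑ y ∈ N, s y := by
        rw [sum_add_distrib, sum_const, nsmul_eq_mul, mul_sum, mul_one_div_cancel hd.ne']
    _ ≤ 1 + 2 * ε * (1 + d ^ η) := by
        have : 0 ≤ 2 * (1 + d ^ η) * ε := by positivity
        nlinarith

lemma mul_rpow_div_inv_mul_rpow {a q d p η : ℝ} (ha : 0 ≤ a) (hq : 0 ≤ q) (hd : 0 ≤ d)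
    (hp : 0 ≤ p) :
    (a * q) ^ (1 + η) / (d⁻¹ * p) ^ η = a ^ (1 + η) * d ^ η * (q ^ (1 + η) / p ^ η) := by
  rw [mul_rpow ha hq, mul_rpow (inv_nonneg.2 hd) hp, inv_rpow hd]
  simp only [div_eq_mul_inv, mul_inv, inv_inv]
  ring

lemma one_add_pow_le_exp_mul {x : ℝ} (hx : 0 ≤ x) (n : ℕ) : (1 + x) ^ n ≤ exp (n * x) := by
  rw [exp_nat_mul]
  exact pow_le_pow_left₀ (by linarith) (by linarith [add_one_le_exp x]) n

lemma sum_le_mul_rpow_of_sum_rpow_div_rpow_le {ι : Type*} (s : Finset ι) {p q : ι → ℝ}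
    (hp : ∀ i ∈ s, 0 < p i) (hq : ∀ i ∈ s, 0 ≤ q i) {η E : ℝ} (hη : 0 ≤ η) (hE : 1 ≤ E)
    (hpq : ∑ i ∈ s, q i ^ (1 + η) / p i ^ η ≤ E) :
    ∑ i ∈ s, q i ≤ E * (∑ i ∈ s, p i) ^ (η / (1 + η)) := by
  -- weighted Hölder with weights `p` applied to `q / p`
  have holder := inner_le_weight_mul_Lp_of_nonneg s.attach (p := 1 + η) (by linarith)
    (fun i => p i) (fun i => q i / p i) (fun i => (hp i i.2).le)
    (fun i => div_nonneg (hq i i.2) (hp i i.2).le)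
  have hmul : ∑ i ∈ s.attach, p i * (q i / p i) = ∑ i ∈ s, q i := by
    rw [← sum_attach s q]
    exact sum_congr rfl fun i _ => mul_div_cancel₀ _ (hp i i.2).ne'
  have hmul_rpow : ∑ i ∈ s.attach, p i * (q i / p i) ^ (1 + η) =
      ∑ i ∈ s, q i ^ (1 + η) / p i ^ η := by
    rw [← sum_attach s fun i => q i ^ (1 + η) / p i ^ η]
    refine sum_congr rfl fun i _ => ?_
    have hpi := hp i i.2
    rw [div_rpow (hq i i.2) hpi.le, rpow_add' hpi.le (by linarith), rpow_one]
    field_simp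
  have hexp : 1 - (1 + η)⁻¹ = η / (1 + η) := by field_simp; ring
  rw [hmul, hmul_rpow, sum_attach s p, hexp] at holder
  have hR0 : 0 ≤ ∑ i ∈ s, q i ^ (1 + η) / p i ^ η :=
    sum_nonneg fun i hi => div_nonneg (rpow_nonneg (hq i hi) _) (rpow_nonneg (hp i hi).le _)
  have hRE : (∑ i ∈ s, q i ^ (1 + η) / p i ^ η) ^ (1 + η)⁻¹ ≤ E :=
    (rpow_le_rpow hR0 hpq (by positivity)).trans
      (rpow_le_self_of_one_le hE (inv_le_one_of_one_le₀ (by linarith)))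
  calc ∑ i ∈ s, q i ≤ _ := holder
    _ ≤ (∑ i ∈ s, p i) ^ (η / (1 + η)) * E :=
      mul_le_mul_of_nonneg_left hRE (rpow_nonneg (sum_nonneg fun i hi => (hp i hi).le) _)
    _ = E * (∑ i ∈ s, p i) ^ (η / (1 + η)) := mul_comm _ _

section Trajectories

variable {V : Type*} (G : SimpleGraph V)

def IsTrajectory (x : V) (n : ℕ) (l : List V) : Prop :=
  l.length = n + 1 ∧ l.head? = some x ∧ l.IsChain G.Adj

def IsHistory (u : V) (h : List V) : Prop :=
  h.head? = some u ∧ h.IsChain G.Adj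

variable {G}

lemma IsTrajectory.eq_singleton {x : V} {l : List V} (hl : IsTrajectory G x 0 l) : l = [x] := by
  obtain ⟨hlen, hhead, -⟩ := hl
  match l, hlen, hhead with
  | [_], _, hhead => simpa using hhead

lemma IsTrajectory.exists_cons {x : V} {n : ℕ} {l : List V} (hl : IsTrajectory G x (n + 1) l) :
    ∃ y m, l = x :: m ∧ G.Adj x y ∧ IsTrajectory G y n m := by
  obtain ⟨hlen, hhead, hchain⟩ := hl
  match l, hlen, hhead, hchain with
  | _ :: y :: r, hlen, hhead, hchain =>
    obtain rfl : _ = x := by simpa using hhead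
    rw [List.isChain_cons_cons] at hchain
    exact ⟨y, y :: r, rfl, hchain.1, by simpa using hlen, rfl, hchain.2⟩

lemma IsTrajectory.of_cons {x x' : V} {n : ℕ} {m : List V}
    (hl : IsTrajectory G x (n + 1) (x' :: m)) :
    G.Adj x (m.headD x) ∧ IsTrajectory G (m.headD x) n m := by
  obtain ⟨y, m', hm', hxy, hm⟩ := hl.exists_cons
  obtain rfl := (List.cons_eq_cons.1 hm').2
  obtain rfl : m.headD x = y := by simp [hm.2.1]
  exact ⟨hxy, hm⟩

lemma IsHistory.concat {u x y : V} {h : List V} (hh : IsHistory G u (h ++ [x]))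
    (hxy : G.Adj x y) : IsHistory G u (h ++ [x] ++ [y]) :=
  ⟨by rw [List.head?_append_of_ne_nil _ (by simp)]; exact hh.1,
    List.IsChain.append hh.2 (List.isChain_singleton y) (by simpa using hxy)⟩

end Trajectories

section Walks

variable {V : Type*} [Fintype V] {G : SimpleGraph V} [DecidableRel G.Adj]

variable (G) in
noncomputable def biasedStep (ε : ℝ) (σ : List V → V → ℝ) (h : List V) (x y : V) : ℝ :=
  (1 - ε) / G.degree x + ε * σ (h ++ [x]) y

variable {u : V} {ε η : ℝ} {σ : List V → V → ℝ}

lemma biasedStep_nonneg (hε0 : 0 ≤ ε) (hε1 : ε ≤ 1)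
    (hσ0 : ∀ h, IsHistory G u h → ∀ y, 0 ≤ σ h y)
    {h : List V} {x : V} (hh : IsHistory G u (h ++ [x])) (y : V) :
    0 ≤ biasedStep G ε σ h x y :=
  add_nonneg (div_nonneg (by linarith) (by positivity)) (mul_nonneg hε0 (hσ0 _ hh y))

lemma sum_biasedStep_rpow_le {dmin dmax : ℕ} (hdmin1 : 1 ≤ dmin) {x : V}
    (hdmin : dmin ≤ G.degree x) (hdmax : G.degree x ≤ dmax) (hη0 : 0 < η) (hη1 : η ≤ 1)
    (hε0 : 0 ≤ ε) (hε1 : ε ≤ 1) (hε : ε ≤ 1 / (dmax : ℝ) ^ (2 * η))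
    {h : List V} (hσ0 : ∀ y, 0 ≤ σ (h ++ [x]) y)
    (hσ1 : ∑ y, σ (h ++ [x]) y = 1) :
    ∑ y ∈ G.neighborFinset x, biasedStep G ε σ h x y ^ (1 + η) * (G.degree x : ℝ) ^ η ≤
      1 + 4 / (dmin : ℝ) ^ η := by
  have hN : (G.neighborFinset x).Nonempty := by
    rw [← card_pos, G.card_neighborFinset_eq_degree]; omega
  have hσN : ∑ y ∈ G.neighborFinset x, σ (h ++ [x]) y ≤ 1 :=
    hσ1 ▸ sum_le_sum_of_subset_of_nonneg (subset_univ _) fun y _ _ => hσ0 y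
  have hstep := sum_mix_rpow_mul_card_rpow_le _ hN _ (fun y _ => hσ0 y) hσN hη0.le hη1 hε0 hε1
  simp only [G.card_neighborFinset_eq_degree] at hstep
  have hk : (1 : ℝ) ≤ (dmin : ℝ) ^ η := one_le_rpow (by exact_mod_cast hdmin1) hη0.le
  have hkd : (dmin : ℝ) ^ η ≤ (G.degree x : ℝ) ^ η := by gcongr
  have hdm : (G.degree x : ℝ) ^ η ≤ (dmax : ℝ) ^ η := by gcongr
  have hm2 : (dmax : ℝ) ^ (2 * η) = ((dmax : ℝ) ^ η) ^ 2 := by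
    rw [mul_comm, rpow_mul (by positivity), rpow_two]
  rw [hm2] at hε
  -- `ε ≤ 1 / m²` and `1 + δ ≤ 2 m`, where `m = dmax ^ η ≥ δ = deg x ^ η ≥ dmin ^ η`
  have hexcess : 2 * ε * (1 + (G.degree x : ℝ) ^ η) ≤ 4 / (dmin : ℝ) ^ η :=
    calc 2 * ε * (1 + (G.degree x : ℝ) ^ η)
        ≤ 2 * (1 / ((dmax : ℝ) ^ η) ^ 2) * (2 * (dmax : ℝ) ^ η) := by gcongr; linarith
      _ = 4 / (dmax : ℝ) ^ η := by field_simp; ring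
      _ ≤ 4 / (dmin : ℝ) ^ η := by gcongr; linarith
  exact hstep.trans (by linarith)

variable [DecidableEq V]

lemma srwP_cons {x y : V} {m : List V} (hm : m.head? = some y) (hxy : G.Adj x y) :
    srwP G (x :: m) = (G.degree x : ℝ)⁻¹ * srwP G m := by
  obtain ⟨r, rfl⟩ := List.head?_eq_some_iff.1 hm
  rw [srwP, if_pos hxy, one_div]

lemma tbrwP_cons {h : List V} {x y : V} {m : List V}
    (hm : m.head? = some y) (hxy : G.Adj x y) :
    tbrwP G ε σ h (x :: m) = biasedStep G ε σ h x y * tbrwP G ε σ (h ++ [x]) m := by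
  obtain ⟨r, rfl⟩ := List.head?_eq_some_iff.1 hm
  rw [tbrwP, if_pos hxy, biasedStep]

lemma srwP_pos {x : V} : ∀ {n : ℕ} {l : List V}, IsTrajectory G x n l → 0 < srwP G l
  | 0, _, hl => by simp [hl.eq_singleton, srwP]
  | _ + 1, _, hl => by
    obtain ⟨y, m, rfl, hxy, hm⟩ := hl.exists_cons
    have := G.degree_pos_iff_exists_adj x |>.2 ⟨y, hxy⟩
    rw [srwP_cons hm.2.1 hxy]
    exact mul_pos (by positivity) (srwP_pos hm)

lemma tbrwP_nonneg (hε0 : 0 ≤ ε) (hε1 : ε ≤ 1)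
    (hσ0 : ∀ h, IsHistory G u h → ∀ y, 0 ≤ σ h y) :
    ∀ {n : ℕ} {x : V} {h l : List V}, IsHistory G u (h ++ [x]) → IsTrajectory G x n l →
      0 ≤ tbrwP G ε σ h l
  | 0, _, _, _, _, hl => by simp [hl.eq_singleton, tbrwP]
  | _ + 1, _, _, _, hh, hl => by
    obtain ⟨y, m, rfl, hxy, hm⟩ := hl.exists_cons
    rw [tbrwP_cons hm.2.1 hxy]
    exact mul_nonneg (biasedStep_nonneg hε0 hε1 hσ0 hh y)
      (tbrwP_nonneg hε0 hε1 hσ0 (hh.concat hxy) hm)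

lemma tbrwP_rpow_div_srwP_rpow_cons (hε0 : 0 ≤ ε) (hε1 : ε ≤ 1)
    (hσ0 : ∀ h, IsHistory G u h → ∀ y, 0 ≤ σ h y) {h m : List V} {x y : V} {n : ℕ}
    (hh : IsHistory G u (h ++ [x])) (hxy : G.Adj x y) (hm : IsTrajectory G y n m) :
    tbrwP G ε σ h (x :: m) ^ (1 + η) / srwP G (x :: m) ^ η =
      biasedStep G ε σ h x y ^ (1 + η) * (G.degree x : ℝ) ^ η *
        (tbrwP G ε σ (h ++ [x]) m ^ (1 + η) / srwP G m ^ η) := by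
  rw [tbrwP_cons hm.2.1 hxy, srwP_cons hm.2.1 hxy]
  exact mul_rpow_div_inv_mul_rpow (biasedStep_nonneg hε0 hε1 hσ0 hh y)
    (tbrwP_nonneg hε0 hε1 hσ0 (hh.concat hxy) hm) (by positivity) (srwP_pos hm).le

theorem sum_tbrwP_rpow_div_srwP_rpow_le (hε0 : 0 ≤ ε) (hε1 : ε ≤ 1)
    (hσ0 : ∀ h, IsHistory G u h → ∀ y, 0 ≤ σ h y) {C : ℝ} (hC : 0 ≤ C)
    (hstep : ∀ h x, IsHistory G u (h ++ [x]) →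
      ∑ y ∈ G.neighborFinset x, biasedStep G ε σ h x y ^ (1 + η) * (G.degree x : ℝ) ^ η ≤ C) :
    ∀ {n : ℕ} {x : V} {h : List V} {S : Finset (List V)}, IsHistory G u (h ++ [x]) →
      (∀ l ∈ S, IsTrajectory G x n l) →
      ∑ l ∈ S, tbrwP G ε σ h l ^ (1 + η) / srwP G l ^ η ≤ C ^ n
  | 0, x, _, S, _, hS => by
    have : S ⊆ {[x]} := fun l hl => mem_singleton.2 (hS l hl).eq_singleton
    rcases subset_singleton_iff.1 this with rfl | rfl <;> simp [tbrwP, srwP]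
  | n + 1, x, h, S, hh, hS => by
    set T := S.preimage (List.cons x) List.cons_injective.injOn
    have hT : ∀ m ∈ T, G.Adj x (m.headD x) ∧ IsTrajectory G (m.headD x) n m :=
      fun m hm => (hS _ (mem_preimage.1 hm)).of_cons
    calc ∑ l ∈ S, tbrwP G ε σ h l ^ (1 + η) / srwP G l ^ η
        = ∑ m ∈ T, tbrwP G ε σ h (x :: m) ^ (1 + η) / srwP G (x :: m) ^ η := by
          refine (sum_preimage _ _ _ _ fun l hl hnot => absurd ?_ hnot).symm
          obtain ⟨_, m, rfl, -⟩ := (hS l hl).exists_cons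
          exact ⟨m, rfl⟩
      _ = ∑ y ∈ G.neighborFinset x, ∑ m ∈ T with m.headD x = y,
            tbrwP G ε σ h (x :: m) ^ (1 + η) / srwP G (x :: m) ^ η :=
          (sum_fiberwise_of_maps_to (fun m hm => (G.mem_neighborFinset _ _).2 (hT m hm).1) _).symm
      _ ≤ ∑ y ∈ G.neighborFinset x,
            biasedStep G ε σ h x y ^ (1 + η) * (G.degree x : ℝ) ^ η * C ^ n := by
          refine sum_le_sum fun y hy => ?_
          have hxy := (G.mem_neighborFinset _ _).1 hy
          have hfiber : ∀ m ∈ {m ∈ T | m.headD x = y}, IsTrajectory G y n m := by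
            intro m hm
            obtain ⟨hmT, rfl⟩ := mem_filter.1 hm
            exact (hT m hmT).2
          rw [sum_congr rfl fun m hm =>
            tbrwP_rpow_div_srwP_rpow_cons hε0 hε1 hσ0 hh hxy (hfiber m hm), ← mul_sum]
          have := biasedStep_nonneg hε0 hε1 hσ0 hh y
          gcongr
          exact sum_tbrwP_rpow_div_srwP_rpow_le hε0 hε1 hσ0 hC hstep (hh.concat hxy) hfiber
      _ ≤ C * C ^ n := by rw [← sum_mul]; gcongr; exact hstep h x hh
      _ = C ^ (n + 1) := (pow_succ' C n).symm

end Walks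

theorem stmt_15_general {V : Type*} [Fintype V] [DecidableEq V] (G : SimpleGraph V)
    [DecidableRel G.Adj] (dmin dmax : ℕ) (hdmin1 : 1 ≤ dmin)
    (hdmin : ∀ x, dmin ≤ G.degree x) (hdmax : ∀ x, G.degree x ≤ dmax)
    (u : V) (t : ℕ) (S : Finset (List V))
    (hS : ∀ l ∈ S, l.length = t + 1 ∧ l.head? = some u ∧ l.Chain' G.Adj)
    (η : ℝ) (hη0 : 0 < η) (hη1 : η ≤ 1)
    (ε : ℝ) (hε0 : 0 ≤ ε) (hε : ε ≤ 1 / (dmax : ℝ) ^ (2 * η)) (σ : List V → V → ℝ)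
    (hσ0 : ∀ h, h.head? = some u → h.Chain' G.Adj → ∀ y, 0 ≤ σ h y)
    (hσsum : ∀ h : List V, h ≠ [] → h.head? = some u → h.Chain' G.Adj →
      ∑ y, σ h y = 1) :
    ∑ l ∈ S, tbrwP G ε σ [] l ≤
      Real.exp (4 * t / (dmin : ℝ) ^ η) *
        (∑ l ∈ S, srwP G l) ^ (η / (1 + η)) := by
  have hdmax1 : (1 : ℝ) ≤ dmax := by exact_mod_cast hdmin1.trans ((hdmin u).trans (hdmax u))
  have hε1 : ε ≤ 1 :=
    hε.trans (div_le_one_of_le₀ (one_le_rpow hdmax1 (by positivity)) (by positivity))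
  have hσ0' : ∀ h, IsHistory G u h → ∀ y, 0 ≤ σ h y := fun h hh => hσ0 h hh.1 hh.2
  have hroot : IsHistory G u ([] ++ [u]) := ⟨rfl, List.isChain_singleton u⟩
  have hpower_mean : ∑ l ∈ S, tbrwP G ε σ [] l ^ (1 + η) / srwP G l ^ η ≤
      (1 + 4 / (dmin : ℝ) ^ η) ^ t :=
    sum_tbrwP_rpow_div_srwP_rpow_le hε0 hε1 hσ0' (by positivity)
      (fun h x hh => sum_biasedStep_rpow_le hdmin1 (hdmin x) (hdmax x) hη0 hη1 hε0 hε1 hε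
        (hσ0' _ hh) (hσsum _ (by simp) hh.1 hh.2)) hroot hS
  have hexp : (1 + 4 / (dmin : ℝ) ^ η) ^ t ≤ exp (4 * t / (dmin : ℝ) ^ η) := by
    convert one_add_pow_le_exp_mul (x := 4 / (dmin : ℝ) ^ η) (by positivity) t using 2
    ring
  exact sum_le_mul_rpow_of_sum_rpow_div_rpow_le S (fun l hl => srwP_pos (hS l hl))
    (fun l hl => tbrwP_nonneg hε0 hε1 hσ0' hroot (hS l hl)) hη0.le
    (one_le_exp (by positivity)) (hpower_mean.trans hexp)

theorem stmt_15 {V : Type*} [Fintype V] [DecidableEq V] (G : SimpleGraph V)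
    [DecidableRel G.Adj] (dmin dmax : ℕ) (hdmin1 : 1 ≤ dmin)
    (hdmin : ∀ x, dmin ≤ G.degree x) (hdmax : ∀ x, G.degree x ≤ dmax)
    (u : V) (t : ℕ) (ht : 0 < t) (S : Finset (List V))
    (hS : ∀ l ∈ S, l.length = t + 1 ∧ l.head? = some u ∧ l.Chain' G.Adj)
    (η : ℝ) (hη0 : 0 < η) (hη1 : η ≤ 1)
    (ε : ℝ) (hε0 : 0 ≤ ε) (hε : ε ≤ 1 / (dmax : ℝ) ^ (2 * η)) (σ : List V → V → ℝ)
    (hσ0 : ∀ h, h.head? = some u → h.Chain' G.Adj → ∀ y, 0 ≤ σ h y)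
    (hσsupp : ∀ (h : List V) (x y : V), h.head? = some u → h.Chain' G.Adj →
      h.getLast? = some x → ¬ G.Adj x y → σ h y = 0)
    (hσsum : ∀ h : List V, h ≠ [] → h.head? = some u → h.Chain' G.Adj →
      ∑ y, σ h y = 1) :
    ∑ l ∈ S, tbrwP G ε σ [] l ≤
      Real.exp (4 * t / (dmin : ℝ) ^ η) *
        (∑ l ∈ S, srwP G l) ^ (η / (1 + η)) :=
  stmt_15_general G dmin dmax hdmin1 hdmin hdmax u t S hS η hη0 hη1 ε hε0 hε σ hσ0 hσsum
end
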